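/- Under the same setup (partition into K groups with between-group separation δ and estimation error max_i ‖ĝᵢ - gᵢ‖ < δ/4), the hierarchical agglomerative clustering algorithm with complete linkage (distance between clusters = maximal pairwise distance), run on {ĝ₁,…,ĝ_n} until exactly K clusters remain, returns exactly the true partition {G₁,…,G_K}. -/
import Mathlib


open Set Finset

/-- under the separation condition (between-group distance `≥ δ` and
estimation error `< δ/4`), complete-linkage hierarchical agglomerative clustering on
the estimated functions, run from `n` singletons until exactly `K` clusters remain,
recovers exactly the true partition into the groups `G_k = {i : grp i = k}`. -/
theorem hac_complete_linkage_recovers_partition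
    {E : Type*} [NormedAddCommGroup E]
    (n K : ℕ) (hK : 0 < K) (hKn : K ≤ n)
    (g ghat : Fin n → E) (m : Fin K → E) (grp : Fin n → Fin K)
    (hgrp_surj : Function.Surjective grp)
    (hg : ∀ i, g i = m (grp i))
    (δ : ℝ) (hδ_pos : 0 < δ)
    (hδ : ∀ k l : Fin K, k ≠ l → δ ≤ ‖m k - m l‖)
    (hest : ∀ i, ‖ghat i - g i‖ < δ / 4)
    -- pairwise estimated distances
    (d : Fin n → Fin n → ℝ) (hd : ∀ i j, d i j = ‖ghat i - ghat j‖)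
    -- complete linkage distance between clusters
    (cl : Finset (Fin n) → Finset (Fin n) → ℝ)
    (hcl : ∀ A B, cl A B = sSup {x | ∃ i ∈ A, ∃ j ∈ B, x = d i j})
    -- the HAC trajectory: `P t` is the set of clusters when `t` clusters remain
    (P : ℕ → Finset (Finset (Fin n)))
    (hstart : P n = Finset.univ.image (fun i : Fin n => ({i} : Finset (Fin n))))
    (hstep : ∀ t, K ≤ t → t < n →
      ∃ A ∈ P (t+1), ∃ B ∈ P (t+1), A ≠ B ∧
        (∀ A' ∈ P (t+1), ∀ B' ∈ P (t+1), A' ≠ B' → cl A B ≤ cl A' B') ∧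
        P t = insert (A ∪ B) (((P (t+1)).erase A).erase B)) :
    P K = Finset.univ.image
      (fun k : Fin K => Finset.univ.filter (fun i : Fin n => grp i = k)) := by
  classical
  -- distance bounds
  have d_lt : ∀ i j, grp i = grp j → d i j < δ / 2 := by
    intro i j h
    have hgij : g i = g j := by rw [hg i, hg j, h]
    have heq : ghat i - ghat j = (ghat i - g i) - (ghat j - g j) := by
      rw [hgij]; abel
    have h1 := hest i
    have h2 := hest j
    have := norm_sub_le (ghat i - g i) (ghat j - g j)
    rw [hd, heq]
    linarith
  have d_gt : ∀ i j, grp i ≠ grp j → δ / 2 < d i j := by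
    intro i j h
    have hsep : δ ≤ ‖g i - g j‖ := by rw [hg i, hg j]; exact hδ _ _ h
    have heq : g i - g j = (g i - ghat i) + (ghat i - ghat j) + (ghat j - g j) := by abel
    have h1 : ‖g i - ghat i‖ < δ / 4 := by rw [norm_sub_rev]; exact hest i
    have h2 : ‖ghat j - g j‖ < δ / 4 := hest j
    have htri : ‖g i - g j‖ ≤ ‖g i - ghat i‖ + ‖ghat i - ghat j‖ + ‖ghat j - g j‖ := by
      rw [heq]
      exact le_trans (norm_add_le _ _) (by gcongr; exact norm_add_le _ _)
    rw [hd]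
    linarith
  -- finiteness of pairwise-distance sets
  have hSfin : ∀ A B : Finset (Fin n), {x | ∃ i ∈ A, ∃ j ∈ B, x = d i j}.Finite := by
    intro A B
    apply Set.Finite.subset (Finset.finite_toSet ((A ×ˢ B).image fun p => d p.1 p.2))
    rintro x ⟨i, hi, j, hj, rfl⟩
    simp only [Finset.coe_image, Set.mem_image, Finset.mem_coe, Finset.mem_product]
    exact ⟨(i, j), ⟨hi, hj⟩, rfl⟩
  have cl_mem : ∀ A B : Finset (Fin n), A.Nonempty → B.Nonempty →
      ∃ i ∈ A, ∃ j ∈ B, cl A B = d i j := by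
    intro A B hA hB
    have hne : {x | ∃ i ∈ A, ∃ j ∈ B, x = d i j}.Nonempty :=
      ⟨d hA.choose hB.choose, hA.choose, hA.choose_spec, hB.choose, hB.choose_spec, rfl⟩
    have := hne.csSup_mem (hSfin A B)
    rw [hcl]
    exact this
  have le_cl : ∀ (A B : Finset (Fin n)) i j, i ∈ A → j ∈ B → d i j ≤ cl A B := by
    intro A B i j hi hj
    rw [hcl]
    exact le_csSup (hSfin A B).bddAbove ⟨i, hi, j, hj, rfl⟩
  -- representative-group function
  set f : Finset (Fin n) → Fin K :=
    fun C => if h : C.Nonempty then grp (C.min' h) else ⟨0, hK⟩ with hf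
  have hfval : ∀ (C : Finset (Fin n)), (∀ i ∈ C, ∀ j ∈ C, grp i = grp j) →
      ∀ i ∈ C, grp i = f C := by
    intro C hpure i hi
    have h : C.Nonempty := ⟨i, hi⟩
    simp only [hf, dif_pos h]
    exact hpure i hi _ (C.min'_mem h)
  -- the invariant
  set Inv : ℕ → Prop := fun t =>
    (∀ A ∈ P t, A.Nonempty) ∧
    (∀ A ∈ P t, ∀ i ∈ A, ∀ j ∈ A, grp i = grp j) ∧
    (∀ i : Fin n, ∃ A ∈ P t, i ∈ A) ∧
    (∀ A ∈ P t, ∀ B ∈ P t, A ≠ B → Disjoint A B) ∧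
    (P t).card = t with hInv
  have base : Inv n := by
    refine ⟨?_, ?_, ?_, ?_, ?_⟩
    · intro A hA
      rw [hstart] at hA
      obtain ⟨i, -, rfl⟩ := Finset.mem_image.1 hA
      exact Finset.singleton_nonempty i
    · intro A hA i hi j hj
      rw [hstart] at hA
      obtain ⟨a, -, rfl⟩ := Finset.mem_image.1 hA
      rw [Finset.mem_singleton.1 hi, Finset.mem_singleton.1 hj]
    · intro i
      exact ⟨{i}, by rw [hstart]; exact Finset.mem_image_of_mem _ (Finset.mem_univ i),
        Finset.mem_singleton_self i⟩
    · intro A hA B hB hAB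
      rw [hstart] at hA hB
      obtain ⟨a, -, rfl⟩ := Finset.mem_image.1 hA
      obtain ⟨b, -, rfl⟩ := Finset.mem_image.1 hB
      simp only [Finset.disjoint_singleton_left, Finset.mem_singleton]
      intro h; exact hAB (by rw [h])
    · rw [hstart, Finset.card_image_of_injective _ Finset.singleton_injective,
        Finset.card_univ, Fintype.card_fin]
  have step : ∀ t, K ≤ t → t < n → Inv (t + 1) → Inv t := by
    intro t hKt htn hinv
    obtain ⟨hne, hpure, hcov, hdisj, hcard⟩ := hinv
    obtain ⟨A, hA, B, hB, hAB, hmin, hPt⟩ := hstep t hKt htn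
    -- pigeonhole: two distinct clusters with the same group
    have hcard' : (Finset.univ : Finset (Fin K)).card < (P (t + 1)).card := by
      rw [hcard, Finset.card_univ, Fintype.card_fin]; omega
    obtain ⟨A', hA', B', hB', hA'B', hfeq⟩ :=
      Finset.exists_ne_map_eq_of_card_lt_of_maps_to hcard'
        (fun C _ => Finset.mem_univ (f C))
    have hclA'B' : cl A' B' < δ / 2 := by
      obtain ⟨i, hi, j, hj, he⟩ := cl_mem A' B' (hne A' hA') (hne B' hB')
      rw [he]
      apply d_lt
      rw [hfval A' (hpure A' hA') i hi, hfval B' (hpure B' hB') j hj, hfeq]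
    have hABlt : cl A B < δ / 2 := lt_of_le_of_lt (hmin A' hA' B' hB' hA'B') hclA'B'
    have keyAB : ∀ i ∈ A, ∀ j ∈ B, grp i = grp j := by
      intro i hi j hj
      by_contra hne'
      have h1 := le_cl A B i j hi hj
      have h2 := d_gt i j hne'
      linarith
    have hpureAB : ∀ i ∈ A ∪ B, ∀ j ∈ A ∪ B, grp i = grp j := by
      intro i hi j hj
      rcases Finset.mem_union.1 hi with hi' | hi' <;> rcases Finset.mem_union.1 hj with hj' | hj'
      · exact hpure A hA i hi' j hj'
      · exact keyAB i hi' j hj'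
      · exact (keyAB j hj' i hi').symm
      · exact hpure B hB i hi' j hj'
    have hmem : ∀ C, C ∈ P t ↔ C = A ∪ B ∨ (C ≠ A ∧ C ≠ B ∧ C ∈ P (t + 1)) := by
      intro C
      rw [hPt]
      simp only [Finset.mem_insert, Finset.mem_erase]
      tauto
    refine ⟨?_, ?_, ?_, ?_, ?_⟩
    · intro C hC
      rcases (hmem C).1 hC with rfl | ⟨-, -, hC'⟩
      · exact (hne A hA).mono Finset.subset_union_left
      · exact hne C hC'
    · intro C hC
      rcases (hmem C).1 hC with rfl | ⟨-, -, hC'⟩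
      · exact hpureAB
      · exact hpure C hC'
    · intro i
      obtain ⟨C, hC, hiC⟩ := hcov i
      by_cases hCA : C = A
      · exact ⟨A ∪ B, (hmem _).2 (Or.inl rfl), Finset.mem_union_left _ (hCA ▸ hiC)⟩
      by_cases hCB : C = B
      · exact ⟨A ∪ B, (hmem _).2 (Or.inl rfl), Finset.mem_union_right _ (hCB ▸ hiC)⟩
      exact ⟨C, (hmem _).2 (Or.inr ⟨hCA, hCB, hC⟩), hiC⟩
    · intro C hC D hD hCD
      rcases (hmem C).1 hC with rfl | ⟨hCA, hCB, hC'⟩ <;>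
        rcases (hmem D).1 hD with rfl | ⟨hDA, hDB, hD'⟩
      · exact absurd rfl hCD
      · exact Finset.disjoint_union_left.2
          ⟨hdisj A hA D hD' (Ne.symm hDA), hdisj B hB D hD' (Ne.symm hDB)⟩
      · exact (Finset.disjoint_union_left.2
          ⟨hdisj A hA C hC' (Ne.symm hCA), hdisj B hB C hC' (Ne.symm hCB)⟩).symm
      · exact hdisj C hC' D hD' hCD
    · have hBA : B ∈ (P (t + 1)).erase A := Finset.mem_erase.2 ⟨Ne.symm hAB, hB⟩
      have hnotin : A ∪ B ∉ ((P (t + 1)).erase A).erase B := by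
        intro h
        obtain ⟨hnB, h2⟩ := Finset.mem_erase.1 h
        obtain ⟨hnA, hmem'⟩ := Finset.mem_erase.1 h2
        obtain ⟨i, hi⟩ := hne A hA
        have hdAB : Disjoint A (A ∪ B) := hdisj A hA (A ∪ B) hmem' (Ne.symm hnA)
        exact (Finset.disjoint_left.1 hdAB hi) (Finset.mem_union_left _ hi)
      rw [hPt, Finset.card_insert_of_notMem hnotin, Finset.card_erase_of_mem hBA,
        Finset.card_erase_of_mem hA, hcard]
      omega
  -- descend from n to K
  have descend : ∀ s, s ≤ n - K → Inv (n - s) := by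
    intro s
    induction s with
    | zero => intro _; simpa using base
    | succ s ih =>
      intro hs
      have h1 : K ≤ n - (s + 1) := by omega
      have h2 : n - (s + 1) < n := by omega
      have h3 : n - (s + 1) + 1 = n - s := by omega
      exact step (n - (s + 1)) h1 h2 (h3 ▸ ih (by omega))
  have invK : Inv K := by
    have := descend (n - K) le_rfl
    rwa [Nat.sub_sub_self hKn] at this
  obtain ⟨hne, hpure, hcov, hdisj, hcard⟩ := invK
  -- f is surjective from P K onto Fin K
  have hsurj : ∀ k : Fin K, ∃ C ∈ P K, f C = k := by
    intro k
    obtain ⟨i, rfl⟩ := hgrp_surj k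
    obtain ⟨C, hC, hiC⟩ := hcov i
    exact ⟨C, hC, (hfval C (hpure C hC) i hiC).symm⟩
  have himg : (P K).image f = Finset.univ := by
    apply Finset.eq_univ_of_forall
    intro k
    obtain ⟨C, hC, hfC⟩ := hsurj k
    exact Finset.mem_image.2 ⟨C, hC, hfC⟩
  have hinj : Set.InjOn f (P K) := by
    apply Finset.injOn_of_card_image_eq
    rw [himg, Finset.card_univ, Fintype.card_fin, hcard]
  -- each cluster equals its group
  have hclust : ∀ C ∈ P K, C = Finset.univ.filter (fun i : Fin n => grp i = f C) := by
    intro C hC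
    ext i
    simp only [Finset.mem_filter, Finset.mem_univ, true_and]
    constructor
    · exact hfval C (hpure C hC) i
    · intro hi
      obtain ⟨D, hD, hiD⟩ := hcov i
      have : f D = f C := by rw [← hfval D (hpure D hD) i hiD, hi]
      rwa [hinj hD hC this] at hiD
  apply Finset.Subset.antisymm
  · intro C hC
    exact Finset.mem_image.2 ⟨f C, Finset.mem_univ _, (hclust C hC).symm⟩
  · intro G hG
    obtain ⟨k, -, rfl⟩ := Finset.mem_image.1 hG
    obtain ⟨C, hC, hfC⟩ := hsurj k
    have := hclust C hC
    rw [hfC] at this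
    rwa [← this]
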